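/- Let u = (u₁,u₂,u₃) : ℝ³ → ℝ³ be a smooth displacement field. Then u satisfies the transverse-isotropy universality constraints — ∂²u₃/∂x₁∂x₃ = ∂²u₃/∂x₂∂x₃ = ∂²u₃/∂x₃² = 0; ∂²u₃/∂x₁² + ∂²u₃/∂x₂² = 0; ∂²u₁/∂x₃² = 0; ∂²u₂/∂x₃² = 0; ∂²u₁/∂x₁² + ∂²u₁/∂x₂² = 0; ∂²u₂/∂x₁² + ∂²u₂/∂x₂² = 0; ∂²u₁/∂x₂² = ∂²u₂/∂x₁∂x₂; ∂²u₂/∂x₁² = ∂²u₁/∂x₁∂x₂; and ∂²u₁/∂x₁∂x₃ + ∂²u₂/∂x₂∂x₃ = 0, all identically on ℝ³ — if and only if there exist constants c, c₁, c₂, c₃ ∈ ℝ, a vector b ∈ ℝ³, smooth functions h₁, h₂, k₁, k₂ : ℝ² → ℝ satisfying the Cauchy–Riemann relations ∂h₁/∂x₂ = ∂h₂/∂x₁ and ∂h₁/∂x₁ = −∂h₂/∂x₂ (and likewise ∂k₁/∂x₂ = ∂k₂/∂x₁ and ∂k₁/∂x₁ = −∂k₂/∂x₂), and a smooth harmonic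 function w : ℝ² → ℝ, such that u₁(x) = c₁x₁ + c₂x₂ + c x₂x₃ + x₃ h₁(x₁,x₂) + k₁(x₁,x₂) + b₁, u₂(x) = −c₂x₁ + c₁x₂ − c x₁x₃ + x₃ h₂(x₁,x₂) + k₂(x₁,x₂) + b₂, and u₃(x) = c₃x₃ + w(x₁,x₂) + b₃. (The Cauchy–Riemann relations say exactly that h₁ + i h₂ and k₁ + i k₂ are holomorphic functions of x₂ + i x₁, as in the paper's representation ξ(x₂ + i x₁) = h₁ + i h₂, η(x₂ + i x₁) = k₁ + i k₂.) -/

import Mathlib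

/-- Partial derivative of a scalar field on `ℝ³` in the `j`-th coordinate direction. -/
noncomputable def pd (j : Fin 3) (f : (Fin 3 → ℝ) → ℝ) : (Fin 3 → ℝ) → ℝ :=
  fun x => fderiv ℝ f x (Pi.single j 1)

/-- The `i`-th component of a vector field on `ℝ³`. -/
def comp (u : (Fin 3 → ℝ) → Fin 3 → ℝ) (i : Fin 3) : (Fin 3 → ℝ) → ℝ :=
  fun x => u x i

/-- Second partial derivative `∂²uᵢ/∂xⱼ∂xₖ` of the `i`-th component of `u`. -/
noncomputable def pdd (j k : Fin 3) (u : (Fin 3 → ℝ) → Fin 3 → ℝ) (i : Fin 3) :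
    (Fin 3 → ℝ) → ℝ :=
  pd j (pd k (comp u i))

/-- Partial derivative of a scalar field on `ℝ²` in the `j`-th coordinate direction. -/
noncomputable def pd2 (j : Fin 2) (f : (Fin 2 → ℝ) → ℝ) : (Fin 2 → ℝ) → ℝ :=
  fun x => fderiv ℝ f x (Pi.single j 1)

abbrev E3 := Fin 3 → ℝ
abbrev E2 := Fin 2 → ℝ

noncomputable def Pr : E3 →L[ℝ] E2 :=
  ContinuousLinearMap.pi ![ContinuousLinearMap.proj 0, ContinuousLinearMap.proj 1]

noncomputable def Io : E2 →L[ℝ] E3 :=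
  ContinuousLinearMap.pi ![ContinuousLinearMap.proj 0, ContinuousLinearMap.proj 1, 0]

lemma Pr_apply (x : E3) : Pr x = ![x 0, x 1] := by
  funext i; fin_cases i <;> simp [Pr]

lemma Io_apply (p : E2) : Io p = ![p 0, p 1, 0] := by
  funext i; fin_cases i <;> simp [Io]

lemma Pr_single0 : Pr (Pi.single 0 1) = Pi.single 0 1 := by
  funext i; fin_cases i <;> simp [Pr]

lemma Pr_single1 : Pr (Pi.single 1 1) = Pi.single 1 1 := by
  funext i; fin_cases i <;> simp [Pr]

lemma Pr_single2 : Pr (Pi.single 2 1) = 0 := by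
  funext i; fin_cases i <;> simp [Pr]

lemma Io_single0 : Io (Pi.single 0 1) = Pi.single 0 1 := by
  funext i; fin_cases i <;> simp [Io]

lemma Io_single1 : Io (Pi.single 1 1) = Pi.single 1 1 := by
  funext i; fin_cases i <;> simp [Io]

lemma Pr_Io (p : E2) : Pr (Io p) = p := by
  funext i; fin_cases i <;> simp [Io, Pr]

section generic
variable {n : ℕ} {f g : (Fin n → ℝ) → ℝ}

/-- generic partial derivative -/
noncomputable def gpd (j : Fin n) (f : (Fin n → ℝ) → ℝ) : (Fin n → ℝ) → ℝ :=
  fun x => fderiv ℝ f x (Pi.single j 1)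

lemma pd_eq_gpd (j : Fin 3) (f) : pd j f = gpd j f := rfl
lemma pd2_eq_gpd (j : Fin 2) (f) : pd2 j f = gpd j f := rfl

lemma contDiff_gpd (hf : ContDiff ℝ (⊤:ℕ∞) f) (j : Fin n) :
    ContDiff ℝ (⊤:ℕ∞) (gpd j f) :=
  (hf.fderiv_right (by norm_cast)).clm_apply contDiff_const

lemma gpd_congr (h : ∀ x, f x = g x) (j : Fin n) (x) : gpd j f x = gpd j g x := by
  have : f = g := funext h
  rw [this]

lemma gpd_comm (hf : ContDiff ℝ (⊤:ℕ∞) f) (j k : Fin n) (x) :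
    gpd j (gpd k f) x = gpd k (gpd j f) x := by
  have hsymm : ∀ v w, fderiv ℝ (fderiv ℝ f) x v w = fderiv ℝ (fderiv ℝ f) x w v := by
    intro v w
    exact (hf.contDiffAt.isSymmSndFDerivAt (by rw [minSmoothness_of_isRCLikeNormedField]; exact WithTop.coe_le_coe.mpr (le_top : (2:ℕ∞) ≤ ⊤))) v w
  have key : ∀ v w : Fin n → ℝ,
      fderiv ℝ (fun y => fderiv ℝ f y v) x w = fderiv ℝ (fderiv ℝ f) x w v := by
    intro v w
    have h1 : (fun y => fderiv ℝ f y v)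
        = ⇑(ContinuousLinearMap.apply ℝ ℝ v) ∘ (fderiv ℝ f) := rfl
    rw [h1, fderiv_comp x ((ContinuousLinearMap.apply ℝ ℝ v).differentiableAt)
      (((hf.fderiv_right (m := ((⊤:ℕ∞) : WithTop ℕ∞)) (by norm_cast)).differentiable (by norm_cast)) x)]
    simp
  have hk : gpd k f = fun y => fderiv ℝ f y (Pi.single k 1) := rfl
  have hj : gpd j f = fun y => fderiv ℝ f y (Pi.single j 1) := rfl
  simp only [gpd, hk, hj]
  rw [key, key, hsymm]

lemma gpd_differentiable (hf : ContDiff ℝ (⊤:ℕ∞) f) :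
    Differentiable ℝ f := hf.differentiable (by norm_cast)

/-- a function with all vanishing partials is constant -/
lemma const_of_gpd_zero (hf : ContDiff ℝ (⊤:ℕ∞) f)
    (h : ∀ j x, gpd j f x = 0) (x y : Fin n → ℝ) : f x = f y := by
  apply is_const_of_fderiv_eq_zero (gpd_differentiable hf)
  intro z
  ext v
  have hv : v = ∑ i, v i • (Pi.single i 1 : Fin n → ℝ) := by
    ext j; simp [Pi.single_apply]
  rw [ContinuousLinearMap.zero_apply, hv, map_sum]
  refine Finset.sum_eq_zero fun i _ => ?_
  rw [map_smul]
  have := h i z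
  simp only [gpd] at this
  simp [this]

lemma gpd_sub (hf : Differentiable ℝ f) (hg : Differentiable ℝ g) (j : Fin n) (x) :
    gpd j (fun y => f y - g y) x = gpd j f x - gpd j g x := by
  simp only [gpd]
  rw [fderiv_fun_sub (hf x) (hg x)]; simp

lemma gpd_add (hf : Differentiable ℝ f) (hg : Differentiable ℝ g) (j : Fin n) (x) :
    gpd j (fun y => f y + g y) x = gpd j f x + gpd j g x := by
  simp only [gpd]
  rw [fderiv_fun_add (hf x) (hg x)]; simp

end generic

lemma compPr_eq (g : E2 → ℝ) : (fun x : E3 => g ![x 0, x 1]) = g ∘ Pr :=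
  funext fun y => by rw [Function.comp_apply, Pr_apply]

lemma hasFDerivAt_compPr (g : E2 → ℝ) (hg : Differentiable ℝ g) (x : E3) :
    HasFDerivAt (fun x : E3 => g ![x 0, x 1]) ((fderiv ℝ g (Pr x)).comp Pr) x := by
  rw [compPr_eq]
  exact ((hg (Pr x)).hasFDerivAt).comp x Pr.hasFDerivAt

lemma pd_compPr (g : E2 → ℝ) (hg : Differentiable ℝ g) (j : Fin 3) (x : E3) :
    pd j (fun x : E3 => g ![x 0, x 1]) x = fderiv ℝ g ![x 0, x 1] (Pr (Pi.single j 1)) := by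
  rw [pd, (hasFDerivAt_compPr g hg x).fderiv, ContinuousLinearMap.comp_apply, Pr_apply]

lemma pd0_compPr (g : E2 → ℝ) (hg : Differentiable ℝ g) (x : E3) :
    pd 0 (fun x : E3 => g ![x 0, x 1]) x = pd2 0 g ![x 0, x 1] := by
  rw [pd_compPr g hg 0 x, Pr_single0]; rfl

lemma pd1_compPr (g : E2 → ℝ) (hg : Differentiable ℝ g) (x : E3) :
    pd 1 (fun x : E3 => g ![x 0, x 1]) x = pd2 1 g ![x 0, x 1] := by
  rw [pd_compPr g hg 1 x, Pr_single1]; rfl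

lemma pd2_compPr (g : E2 → ℝ) (hg : Differentiable ℝ g) (x : E3) :
    pd 2 (fun x : E3 => g ![x 0, x 1]) x = 0 := by
  rw [pd_compPr g hg 2 x, Pr_single2, map_zero]

lemma compIo_eq (f : E3 → ℝ) : (fun p : E2 => f (Io p)) = f ∘ Io := rfl

lemma pd2_compIo (f : E3 → ℝ) (hf : Differentiable ℝ f) (j : Fin 2) (p : E2) :
    pd2 j (fun p : E2 => f (Io p)) p = fderiv ℝ f (Io p) (Io (Pi.single j 1)) := by
  rw [pd2, compIo_eq, fderiv_comp p (hf (Io p)) Io.differentiableAt,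
    Io.fderiv, ContinuousLinearMap.comp_apply]

lemma pd20_compIo (f : E3 → ℝ) (hf : Differentiable ℝ f) (p : E2) :
    pd2 0 (fun p : E2 => f (Io p)) p = pd 0 f (Io p) := by
  rw [pd2_compIo f hf 0 p, Io_single0]; rfl

lemma pd21_compIo (f : E3 → ℝ) (hf : Differentiable ℝ f) (p : E2) :
    pd2 1 (fun p : E2 => f (Io p)) p = pd 1 f (Io p) := by
  rw [pd2_compIo f hf 1 p, Io_single1]; rfl

open ContinuousLinearMap in
lemma master {g m : E2 → ℝ} (hg : ContDiff ℝ (⊤:ℕ∞) g) (hm : ContDiff ℝ (⊤:ℕ∞) m)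
    (α β γ δ ε κ : ℝ) {F : E3 → ℝ}
    (hF : ∀ x, F x = α * x 0 + β * x 1 + γ * (x 0 * x 2) + δ * (x 1 * x 2) + ε * x 2
        + x 2 * g ![x 0, x 1] + m ![x 0, x 1] + κ) :
    (∀ x, pd 0 F x = γ * x 2 + x 2 * pd2 0 g ![x 0, x 1] + pd2 0 m ![x 0, x 1] + α) ∧
    (∀ x, pd 1 F x = δ * x 2 + x 2 * pd2 1 g ![x 0, x 1] + pd2 1 m ![x 0, x 1] + β) ∧
    (∀ x, pd 2 F x = γ * x 0 + δ * x 1 + g ![x 0, x 1] + ε) := by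
  have hFeq : F = fun x => α * x 0 + β * x 1 + γ * (x 0 * x 2) + δ * (x 1 * x 2) + ε * x 2
      + x 2 * g ![x 0, x 1] + m ![x 0, x 1] + κ := funext hF
  have hgd : Differentiable ℝ g := gpd_differentiable hg
  have hmd : Differentiable ℝ m := gpd_differentiable hm
  have key : ∀ x : E3,
      HasFDerivAt F
        ((α • proj 0 + β • proj 1 + γ • ((x 0) • proj 2 + (x 2) • proj 0)
          + δ • ((x 1) • proj 2 + (x 2) • proj 1) + ε • proj 2
          + ((x 2) • ((fderiv ℝ g (Pr x)).comp Pr) + (g ![x 0, x 1]) • proj 2)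
          + (fderiv ℝ m (Pr x)).comp Pr) : E3 →L[ℝ] ℝ) x := by
    intro x
    have h0 : HasFDerivAt (fun x : E3 => x 0) (proj 0 : E3 →L[ℝ] ℝ) x :=
      (proj 0 : E3 →L[ℝ] ℝ).hasFDerivAt
    have h1 : HasFDerivAt (fun x : E3 => x 1) (proj 1 : E3 →L[ℝ] ℝ) x :=
      (proj 1 : E3 →L[ℝ] ℝ).hasFDerivAt
    have h2 : HasFDerivAt (fun x : E3 => x 2) (proj 2 : E3 →L[ℝ] ℝ) x :=
      (proj 2 : E3 →L[ℝ] ℝ).hasFDerivAt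
    have hgc := hasFDerivAt_compPr g hgd x
    have hmc := hasFDerivAt_compPr m hmd x
    rw [hFeq]
    exact (((((((h0.const_mul α).add (h1.const_mul β)).add
      ((h0.mul h2).const_mul γ)).add ((h1.mul h2).const_mul δ)).add
      (h2.const_mul ε)).add (h2.mul hgc)).add hmc).add_const κ
  refine ⟨fun x => ?_, fun x => ?_, fun x => ?_⟩
  · have := (key x).fderiv
    rw [pd, this]
    simp only [add_apply, smul_apply, coe_smul', Pi.smul_apply, comp_apply, proj_apply,
      smul_eq_mul, Pr_single0]
    have e0 : (Pi.single 0 1 : E3) 0 = 1 := rfl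
    have e1 : (Pi.single 0 1 : E3) 1 = 0 := rfl
    have e2 : (Pi.single 0 1 : E3) 2 = 0 := rfl
    rw [e0, e1, e2, Pr_apply]
    show _ = γ * x 2 + x 2 * fderiv ℝ g ![x 0, x 1] (Pi.single 0 1)
      + fderiv ℝ m ![x 0, x 1] (Pi.single 0 1) + α
    ring
  · have := (key x).fderiv
    rw [pd, this]
    simp only [add_apply, smul_apply, coe_smul', Pi.smul_apply, comp_apply, proj_apply,
      smul_eq_mul, Pr_single1]
    have e0 : (Pi.single 1 1 : E3) 0 = 0 := rfl
    have e1 : (Pi.single 1 1 : E3) 1 = 1 := rfl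
    have e2 : (Pi.single 1 1 : E3) 2 = 0 := rfl
    rw [e0, e1, e2, Pr_apply]
    show _ = δ * x 2 + x 2 * fderiv ℝ g ![x 0, x 1] (Pi.single 1 1)
      + fderiv ℝ m ![x 0, x 1] (Pi.single 1 1) + β
    ring
  · have := (key x).fderiv
    rw [pd, this]
    simp only [add_apply, smul_apply, coe_smul', Pi.smul_apply, comp_apply, proj_apply,
      smul_eq_mul, Pr_single2, map_zero]
    have e0 : (Pi.single 2 1 : E3) 0 = 0 := rfl
    have e1 : (Pi.single 2 1 : E3) 1 = 0 := rfl
    have e2 : (Pi.single 2 1 : E3) 2 = 1 := rfl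
    rw [e0, e1, e2]
    ring

lemma gpd_zero {n : ℕ} (j : Fin n) (x) : gpd j (fun _ => (0:ℝ)) x = 0 := by
  simp [gpd]

lemma gpd_const {n : ℕ} (j : Fin n) (k : ℝ) (x) : gpd j (fun _ => k) x = 0 := by
  simp [gpd]

lemma gpd_neg {n : ℕ} {f : (Fin n → ℝ) → ℝ} (j : Fin n) (x) :
    gpd j (fun y => -f y) x = -gpd j f x := by
  simp [gpd, fderiv_neg]

lemma contDiff_pd2 {f : E2 → ℝ} (hf : ContDiff ℝ (⊤:ℕ∞) f) (j : Fin 2) :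
    ContDiff ℝ (⊤:ℕ∞) (pd2 j f) := by
  rw [pd2_eq_gpd]; exact contDiff_gpd hf j

lemma contDiff_pd {f : E3 → ℝ} (hf : ContDiff ℝ (⊤:ℕ∞) f) (j : Fin 3) :
    ContDiff ℝ (⊤:ℕ∞) (pd j f) := by
  rw [pd_eq_gpd]; exact contDiff_gpd hf j

lemma pd2_congr {f g : E2 → ℝ} (h : ∀ p, f p = g p) (j : Fin 2) (p) :
    pd2 j f p = pd2 j g p := gpd_congr h j p

lemma pd_congr {f g : E3 → ℝ} (h : ∀ x, f x = g x) (j : Fin 3) (x) :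
    pd j f x = pd j g x := gpd_congr h j x

lemma pd2_comm {f : E2 → ℝ} (hf : ContDiff ℝ (⊤:ℕ∞) f) (j k : Fin 2) (p) :
    pd2 j (pd2 k f) p = pd2 k (pd2 j f) p := gpd_comm hf j k p

lemma pd_comm {f : E3 → ℝ} (hf : ContDiff ℝ (⊤:ℕ∞) f) (j k : Fin 3) (x) :
    pd j (pd k f) x = pd k (pd j f) x := gpd_comm hf j k x

lemma pd2_neg {f : E2 → ℝ} (j : Fin 2) (p) :
    pd2 j (fun q => -f q) p = -pd2 j f p := gpd_neg j p

lemma pd2_zero (j : Fin 2) (p) : pd2 j (fun _ => (0:ℝ)) p = 0 := gpd_zero j p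

section CRharm
variable {f₁ f₂ : E2 → ℝ} (hf₁ : ContDiff ℝ (⊤:ℕ∞) f₁) (hf₂ : ContDiff ℝ (⊤:ℕ∞) f₂)
  (hcr1 : ∀ p, pd2 1 f₁ p = pd2 0 f₂ p) (hcr2 : ∀ p, pd2 0 f₁ p = -pd2 1 f₂ p)

include hf₂ hcr1 hcr2 in
lemma harm1_of_CR (p) : pd2 0 (pd2 0 f₁) p + pd2 1 (pd2 1 f₁) p = 0 := by
  have h1 : pd2 0 (pd2 0 f₁) p = -pd2 0 (pd2 1 f₂) p := by
    rw [pd2_congr hcr2 0 p, pd2_neg]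
  have h2 : pd2 1 (pd2 1 f₁) p = pd2 0 (pd2 1 f₂) p := by
    rw [pd2_congr hcr1 1 p, pd2_comm hf₂ 1 0 p]
  rw [h1, h2]; ring

include hf₁ hcr1 hcr2 in
lemma harm2_of_CR (p) : pd2 0 (pd2 0 f₂) p + pd2 1 (pd2 1 f₂) p = 0 := by
  have h1 : pd2 0 (pd2 0 f₂) p = pd2 0 (pd2 1 f₁) p :=
    (pd2_congr (fun q => (hcr1 q).symm) 0 p)
  have h2 : pd2 1 (pd2 1 f₂) p = -pd2 0 (pd2 1 f₁) p := by
    have : ∀ q, pd2 1 f₂ q = -pd2 0 f₁ q := fun q => by rw [hcr2 q]; ring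
    rw [pd2_congr this 1 p, pd2_neg, pd2_comm hf₁ 1 0 p]
  rw [h1, h2]; ring

end CRharm


def z2 : E2 → ℝ := fun _ => 0

lemma z2_apply (p : E2) : z2 p = 0 := rfl

lemma pd2_z2 (j : Fin 2) (p) : pd2 j z2 p = 0 := gpd_zero j p

lemma pd_const (j : Fin 3) (k : ℝ) (x) : pd j (fun _ => k) x = 0 := gpd_const j k x

lemma reverse_direction (u : (Fin 3 → ℝ) → Fin 3 → ℝ)
    (c c₁ c₂ c₃ : ℝ) (b : Fin 3 → ℝ) (h₁ h₂ k₁ k₂ w : E2 → ℝ)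
    (hh₁ : ContDiff ℝ (⊤:ℕ∞) h₁) (hh₂ : ContDiff ℝ (⊤:ℕ∞) h₂)
    (hk₁ : ContDiff ℝ (⊤:ℕ∞) k₁) (hk₂ : ContDiff ℝ (⊤:ℕ∞) k₂)
    (hw : ContDiff ℝ (⊤:ℕ∞) w)
    (hcrh1 : ∀ p, pd2 1 h₁ p = pd2 0 h₂ p) (hcrh2 : ∀ p, pd2 0 h₁ p = -pd2 1 h₂ p)
    (hcrk1 : ∀ p, pd2 1 k₁ p = pd2 0 k₂ p) (hcrk2 : ∀ p, pd2 0 k₁ p = -pd2 1 k₂ p)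
    (hharm : ∀ p, pd2 0 (pd2 0 w) p + pd2 1 (pd2 1 w) p = 0)
    (hu0 : ∀ x, u x 0 = c₁ * x 0 + c₂ * x 1 + c * (x 1 * x 2)
        + x 2 * h₁ ![x 0, x 1] + k₁ ![x 0, x 1] + b 0)
    (hu1 : ∀ x, u x 1 = -(c₂ * x 0) + c₁ * x 1 - c * (x 0 * x 2)
        + x 2 * h₂ ![x 0, x 1] + k₂ ![x 0, x 1] + b 1)
    (hu2 : ∀ x, u x 2 = c₃ * x 2 + w ![x 0, x 1] + b 2) :
    (∀ x, pdd 0 2 u 2 x = 0) ∧ (∀ x, pdd 1 2 u 2 x = 0) ∧ (∀ x, pdd 2 2 u 2 x = 0) ∧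
    (∀ x, pdd 0 0 u 2 x + pdd 1 1 u 2 x = 0) ∧
    (∀ x, pdd 2 2 u 0 x = 0) ∧
    (∀ x, pdd 2 2 u 1 x = 0) ∧
    (∀ x, pdd 0 0 u 0 x + pdd 1 1 u 0 x = 0) ∧
    (∀ x, pdd 0 0 u 1 x + pdd 1 1 u 1 x = 0) ∧
    (∀ x, pdd 1 1 u 0 x = pdd 0 1 u 1 x) ∧
    (∀ x, pdd 0 0 u 1 x = pdd 0 1 u 0 x) ∧
    (∀ x, pdd 0 2 u 0 x + pdd 1 2 u 1 x = 0) := by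
  -- level 0 for u₀
  have hF0 : ∀ x : E3, comp u 0 x = c₁ * x 0 + c₂ * x 1 + 0 * (x 0 * x 2) + c * (x 1 * x 2)
      + 0 * x 2 + x 2 * h₁ ![x 0, x 1] + k₁ ![x 0, x 1] + b 0 := by
    intro x; show u x 0 = _; rw [hu0 x]; ring
  obtain ⟨A0, A1, A2⟩ := master hh₁ hk₁ c₁ c₂ 0 c 0 (b 0) hF0
  -- level 0 for u₁
  have hF1 : ∀ x : E3, comp u 1 x = (-c₂) * x 0 + c₁ * x 1 + (-c) * (x 0 * x 2)
      + 0 * (x 1 * x 2) + 0 * x 2 + x 2 * h₂ ![x 0, x 1] + k₂ ![x 0, x 1] + b 1 := by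
    intro x; show u x 1 = _; rw [hu1 x]; ring
  obtain ⟨B0, B1, B2⟩ := master hh₂ hk₂ (-c₂) c₁ (-c) 0 0 (b 1) hF1
  -- level 0 for u₂
  have hF2 : ∀ x : E3, comp u 2 x = 0 * x 0 + 0 * x 1 + 0 * (x 0 * x 2) + 0 * (x 1 * x 2)
      + c₃ * x 2 + x 2 * z2 ![x 0, x 1] + w ![x 0, x 1] + b 2 := by
    intro x; show u x 2 = _; rw [hu2 x, z2_apply]; ring
  obtain ⟨C0, C1, C2⟩ := master (by exact contDiff_const) hw 0 0 0 0 c₃ (b 2) hF2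
  -- level 1 shapes for u₀
  have hA0 : ∀ x : E3, pd 0 (comp u 0) x = 0 * x 0 + 0 * x 1 + 0 * (x 0 * x 2)
      + 0 * (x 1 * x 2) + 0 * x 2 + x 2 * (pd2 0 h₁) ![x 0, x 1] + (pd2 0 k₁) ![x 0, x 1]
      + c₁ := by intro x; rw [A0 x]; ring
  obtain ⟨A00, A01, A02⟩ := master (contDiff_pd2 hh₁ 0) (contDiff_pd2 hk₁ 0) 0 0 0 0 0 c₁ hA0
  have hA1 : ∀ x : E3, pd 1 (comp u 0) x = 0 * x 0 + 0 * x 1 + 0 * (x 0 * x 2)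
      + 0 * (x 1 * x 2) + c * x 2 + x 2 * (pd2 1 h₁) ![x 0, x 1] + (pd2 1 k₁) ![x 0, x 1]
      + c₂ := by intro x; rw [A1 x]; ring
  obtain ⟨A10, A11, A12⟩ := master (contDiff_pd2 hh₁ 1) (contDiff_pd2 hk₁ 1) 0 0 0 0 c c₂ hA1
  have hA2 : ∀ x : E3, pd 2 (comp u 0) x = 0 * x 0 + c * x 1 + 0 * (x 0 * x 2)
      + 0 * (x 1 * x 2) + 0 * x 2 + x 2 * z2 ![x 0, x 1] + h₁ ![x 0, x 1] + 0 := by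
    intro x; rw [A2 x, z2_apply]; ring
  obtain ⟨A20, A21, A22⟩ := master (by exact contDiff_const) hh₁ 0 c 0 0 0 0 hA2
  -- level 1 shapes for u₁
  have hB0 : ∀ x : E3, pd 0 (comp u 1) x = 0 * x 0 + 0 * x 1 + 0 * (x 0 * x 2)
      + 0 * (x 1 * x 2) + (-c) * x 2 + x 2 * (pd2 0 h₂) ![x 0, x 1] + (pd2 0 k₂) ![x 0, x 1]
      + (-c₂) := by intro x; rw [B0 x]; ring
  obtain ⟨B00, B01, B02⟩ :=
    master (contDiff_pd2 hh₂ 0) (contDiff_pd2 hk₂ 0) 0 0 0 0 (-c) (-c₂) hB0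
  have hB1 : ∀ x : E3, pd 1 (comp u 1) x = 0 * x 0 + 0 * x 1 + 0 * (x 0 * x 2)
      + 0 * (x 1 * x 2) + 0 * x 2 + x 2 * (pd2 1 h₂) ![x 0, x 1] + (pd2 1 k₂) ![x 0, x 1]
      + c₁ := by intro x; rw [B1 x]; ring
  obtain ⟨B10, B11, B12⟩ := master (contDiff_pd2 hh₂ 1) (contDiff_pd2 hk₂ 1) 0 0 0 0 0 c₁ hB1
  have hB2 : ∀ x : E3, pd 2 (comp u 1) x = (-c) * x 0 + 0 * x 1 + 0 * (x 0 * x 2)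
      + 0 * (x 1 * x 2) + 0 * x 2 + x 2 * z2 ![x 0, x 1] + h₂ ![x 0, x 1] + 0 := by
    intro x; rw [B2 x, z2_apply]; ring
  obtain ⟨B20, B21, B22⟩ := master (by exact contDiff_const) hh₂ (-c) 0 0 0 0 0 hB2
  -- u₂ first derivatives are simple
  have hC2c : ∀ x : E3, pd 2 (comp u 2) x = c₃ := by
    intro x; rw [C2 x, z2_apply]; ring
  have hC0w : ∀ x : E3, pd 0 (comp u 2) x = pd2 0 w ![x 0, x 1] := by
    intro x; rw [C0 x, pd2_z2]; ring
  have hC1w : ∀ x : E3, pd 1 (comp u 2) x = pd2 1 w ![x 0, x 1] := by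
    intro x; rw [C1 x, pd2_z2]; ring
  have hwd0 : Differentiable ℝ (pd2 0 w) := gpd_differentiable (contDiff_pd2 hw 0)
  have hwd1 : Differentiable ℝ (pd2 1 w) := gpd_differentiable (contDiff_pd2 hw 1)
  refine ⟨?_, ?_, ?_, ?_, ?_, ?_, ?_, ?_, ?_, ?_, ?_⟩
  · intro x
    show pd 0 (pd 2 (comp u 2)) x = 0
    rw [pd_congr hC2c 0 x, pd_const]
  · intro x
    show pd 1 (pd 2 (comp u 2)) x = 0
    rw [pd_congr hC2c 1 x, pd_const]
  · intro x
    show pd 2 (pd 2 (comp u 2)) x = 0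
    rw [pd_congr hC2c 2 x, pd_const]
  · intro x
    show pd 0 (pd 0 (comp u 2)) x + pd 1 (pd 1 (comp u 2)) x = 0
    rw [pd_congr hC0w 0 x, pd_congr hC1w 1 x, pd0_compPr _ hwd0 x, pd1_compPr _ hwd1 x]
    exact hharm ![x 0, x 1]
  · intro x
    show pd 2 (pd 2 (comp u 0)) x = 0
    rw [A22 x, z2_apply]; ring
  · intro x
    show pd 2 (pd 2 (comp u 1)) x = 0
    rw [B22 x, z2_apply]; ring
  · intro x
    show pd 0 (pd 0 (comp u 0)) x + pd 1 (pd 1 (comp u 0)) x = 0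
    rw [A00 x, A11 x]
    have e1 := harm1_of_CR hh₂ hcrh1 hcrh2 ![x 0, x 1]
    have e2 := harm1_of_CR hk₂ hcrk1 hcrk2 ![x 0, x 1]
    linear_combination x 2 * e1 + e2
  · intro x
    show pd 0 (pd 0 (comp u 1)) x + pd 1 (pd 1 (comp u 1)) x = 0
    rw [B00 x, B11 x]
    have e1 := harm2_of_CR hh₁ hcrh1 hcrh2 ![x 0, x 1]
    have e2 := harm2_of_CR hk₁ hcrk1 hcrk2 ![x 0, x 1]
    linear_combination x 2 * e1 + e2
  · intro x
    show pd 1 (pd 1 (comp u 0)) x = pd 0 (pd 1 (comp u 1)) x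
    rw [A11 x, B10 x]
    have eh : pd2 1 (pd2 1 h₁) ![x 0, x 1] = pd2 0 (pd2 1 h₂) ![x 0, x 1] := by
      rw [pd2_congr hcrh1 1 _, pd2_comm hh₂ 1 0 _]
    have ek : pd2 1 (pd2 1 k₁) ![x 0, x 1] = pd2 0 (pd2 1 k₂) ![x 0, x 1] := by
      rw [pd2_congr hcrk1 1 _, pd2_comm hk₂ 1 0 _]
    linear_combination x 2 * eh + ek
  · intro x
    show pd 0 (pd 0 (comp u 1)) x = pd 0 (pd 1 (comp u 0)) x
    rw [B00 x, A10 x]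
    have eh : pd2 0 (pd2 0 h₂) ![x 0, x 1] = pd2 0 (pd2 1 h₁) ![x 0, x 1] :=
      pd2_congr (fun q => (hcrh1 q).symm) 0 _
    have ek : pd2 0 (pd2 0 k₂) ![x 0, x 1] = pd2 0 (pd2 1 k₁) ![x 0, x 1] :=
      pd2_congr (fun q => (hcrk1 q).symm) 0 _
    linear_combination x 2 * eh + ek
  · intro x
    show pd 0 (pd 2 (comp u 0)) x + pd 1 (pd 2 (comp u 1)) x = 0
    rw [A20 x, B21 x, pd2_z2, pd2_z2]
    linear_combination hcrh2 ![x 0, x 1]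

lemma hasDerivAt_line (x : E3) (t : ℝ) :
    HasDerivAt (fun s : ℝ => x + (s - x 2) • (Pi.single 2 1 : E3)) (Pi.single 2 1) t := by
  have h : HasDerivAt (fun s : ℝ => s - x 2) 1 t := (hasDerivAt_id t).sub_const (x 2)
  simpa using (h.smul_const (Pi.single 2 1 : E3)).const_add x

lemma comp_line_deriv (f : E3 → ℝ) (hf : Differentiable ℝ f) (x : E3) (t : ℝ) :
    HasDerivAt (fun s : ℝ => f (x + (s - x 2) • (Pi.single 2 1 : E3)))
      (pd 2 f (x + (t - x 2) • (Pi.single 2 1 : E3))) t := by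
  have := (hf _).hasFDerivAt.comp_hasDerivAt t (hasDerivAt_line x t)
  simpa [pd, Function.comp_def] using this

lemma Io_Pr (x : E3) : Io (Pr x) = x + (0 - x 2) • (Pi.single 2 1 : E3) := by
  funext j; fin_cases j <;> simp [Io, Pr, Pi.single_apply]

lemma affine_of_pdd22 {f : E3 → ℝ} (hf : ContDiff ℝ (⊤:ℕ∞) f)
    (h : ∀ x, pd 2 (pd 2 f) x = 0) (x : E3) :
    f x = f (Io (Pr x)) + x 2 * pd 2 f (Io (Pr x)) := by
  set L : ℝ → E3 := fun s => x + (s - x 2) • (Pi.single 2 1 : E3) with hL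
  have hfd : Differentiable ℝ f := gpd_differentiable hf
  have hgd : Differentiable ℝ (pd 2 f) := gpd_differentiable (contDiff_pd hf 2)
  have hψ : ∀ t : ℝ, (pd 2 f) (L t) = (pd 2 f) (L 0) := by
    intro t
    have hder : ∀ s : ℝ, HasDerivAt (fun s => pd 2 f (L s)) 0 s := by
      intro s
      have := comp_line_deriv (pd 2 f) hgd x s
      rwa [h (L s)] at this
    exact is_const_of_deriv_eq_zero (fun s => (hder s).differentiableAt)
      (fun s => (hder s).deriv) t 0
  have hφ : ∀ t : ℝ, f (L t) = f (L 0) + t * pd 2 f (L 0) := by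
    intro t
    have hder : ∀ s : ℝ, HasDerivAt (fun s => f (L s) - s * pd 2 f (L 0)) 0 s := by
      intro s
      have h1 := comp_line_deriv f hfd x s
      have h2 : HasDerivAt (fun s : ℝ => s * pd 2 f (L 0)) (pd 2 f (L 0)) s := by
        simpa using (hasDerivAt_id s).mul_const (pd 2 f (L 0))
      have h3 := h1.sub h2
      rw [show pd 2 f (L s) - pd 2 f (L 0) = 0 by rw [hψ s]; ring] at h3
      exact h3
    have hc := is_const_of_deriv_eq_zero (fun s => (hder s).differentiableAt)
      (fun s => (hder s).deriv) t 0
    linarith [hc]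
  have hx2 : L (x 2) = x := by simp [hL]
  have h0 : L 0 = Io (Pr x) := by rw [Io_Pr x]
  calc f x = f (L (x 2)) := by rw [hx2]
    _ = f (L 0) + x 2 * pd 2 f (L 0) := hφ (x 2)
    _ = _ := by rw [h0]

lemma pdd_def (j k : Fin 3) (u) (i : Fin 3) : pdd j k u i = pd j (pd k (comp u i)) := rfl

lemma pd2_sub {f g : E2 → ℝ} (hf : Differentiable ℝ f) (hg : Differentiable ℝ g)
    (j : Fin 2) (p) : pd2 j (fun q => f q - g q) p = pd2 j f p - pd2 j g p :=
  gpd_sub hf hg j p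

lemma pd2_add {f g : E2 → ℝ} (hf : Differentiable ℝ f) (hg : Differentiable ℝ g)
    (j : Fin 2) (p) : pd2 j (fun q => f q + g q) p = pd2 j f p + pd2 j g p :=
  gpd_add hf hg j p

lemma pd2_mul_coord (a : ℝ) (i j : Fin 2) (p : E2) :
    pd2 j (fun q : E2 => a * q i) p = a * (Pi.single j 1 : E2) i := by
  have h : HasFDerivAt (fun q : E2 => a * q i)
      (a • (ContinuousLinearMap.proj i : E2 →L[ℝ] ℝ)) p :=
    (ContinuousLinearMap.proj i : E2 →L[ℝ] ℝ).hasFDerivAt.const_mul a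
  rw [pd2, h.fderiv]
  simp

lemma pd_push2 {f : E3 → ℝ} (hf : ContDiff ℝ (⊤:ℕ∞) f) (j k : Fin 3) (x) :
    pd j (pd k (pd 2 f)) x = pd 2 (pd j (pd k f)) x := by
  rw [pd_congr (fun y => pd_comm hf k 2 y) j x, pd_comm (contDiff_pd hf k) j 2 x]

lemma forward_direction (u : (Fin 3 → ℝ) → Fin 3 → ℝ) (hu : ContDiff ℝ (⊤ : ℕ∞) u)
    (e1 : ∀ x, pdd 0 2 u 2 x = 0) (e2 : ∀ x, pdd 1 2 u 2 x = 0)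
    (e3 : ∀ x, pdd 2 2 u 2 x = 0)
    (e4 : ∀ x, pdd 0 0 u 2 x + pdd 1 1 u 2 x = 0)
    (e5 : ∀ x, pdd 2 2 u 0 x = 0) (e6 : ∀ x, pdd 2 2 u 1 x = 0)
    (e7 : ∀ x, pdd 0 0 u 0 x + pdd 1 1 u 0 x = 0)
    (e8 : ∀ x, pdd 0 0 u 1 x + pdd 1 1 u 1 x = 0)
    (e9 : ∀ x, pdd 1 1 u 0 x = pdd 0 1 u 1 x)
    (e10 : ∀ x, pdd 0 0 u 1 x = pdd 0 1 u 0 x)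
    (e11 : ∀ x, pdd 0 2 u 0 x + pdd 1 2 u 1 x = 0) :
    ∃ (c c₁ c₂ c₃ : ℝ) (b : Fin 3 → ℝ) (h₁ h₂ k₁ k₂ w : (Fin 2 → ℝ) → ℝ),
      ContDiff ℝ (⊤ : ℕ∞) h₁ ∧ ContDiff ℝ (⊤ : ℕ∞) h₂ ∧
      ContDiff ℝ (⊤ : ℕ∞) k₁ ∧ ContDiff ℝ (⊤ : ℕ∞) k₂ ∧
      ContDiff ℝ (⊤ : ℕ∞) w ∧
      (∀ p, pd2 1 h₁ p = pd2 0 h₂ p) ∧ (∀ p, pd2 0 h₁ p = -pd2 1 h₂ p) ∧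
      (∀ p, pd2 1 k₁ p = pd2 0 k₂ p) ∧ (∀ p, pd2 0 k₁ p = -pd2 1 k₂ p) ∧
      (∀ p, pd2 0 (pd2 0 w) p + pd2 1 (pd2 1 w) p = 0) ∧
      (∀ x, u x 0 = c₁ * x 0 + c₂ * x 1 + c * (x 1 * x 2)
          + x 2 * h₁ ![x 0, x 1] + k₁ ![x 0, x 1] + b 0) ∧
      (∀ x, u x 1 = -(c₂ * x 0) + c₁ * x 1 - c * (x 0 * x 2)
          + x 2 * h₂ ![x 0, x 1] + k₂ ![x 0, x 1] + b 1) ∧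
      (∀ x, u x 2 = c₃ * x 2 + w ![x 0, x 1] + b 2) := by
  have hf0 : ContDiff ℝ (⊤:ℕ∞) (comp u 0) := contDiff_pi.mp hu 0
  have hf1 : ContDiff ℝ (⊤:ℕ∞) (comp u 1) := contDiff_pi.mp hu 1
  have hf2 : ContDiff ℝ (⊤:ℕ∞) (comp u 2) := contDiff_pi.mp hu 2
  have hfd0 : Differentiable ℝ (comp u 0) := gpd_differentiable hf0
  have hfd1 : Differentiable ℝ (comp u 1) := gpd_differentiable hf1
  have hfd2 : Differentiable ℝ (comp u 2) := gpd_differentiable hf2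
  have E5 : ∀ y, pd 2 (pd 2 (comp u 0)) y = 0 := e5
  have E6 : ∀ y, pd 2 (pd 2 (comp u 1)) y = 0 := e6
  have E7 : ∀ y, pd 0 (pd 0 (comp u 0)) y + pd 1 (pd 1 (comp u 0)) y = 0 := e7
  have E8 : ∀ y, pd 0 (pd 0 (comp u 1)) y + pd 1 (pd 1 (comp u 1)) y = 0 := e8
  have E9 : ∀ y, pd 1 (pd 1 (comp u 0)) y = pd 0 (pd 1 (comp u 1)) y := e9
  have E10 : ∀ y, pd 0 (pd 0 (comp u 1)) y = pd 0 (pd 1 (comp u 0)) y := e10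
  have E11 : ∀ y, pd 0 (pd 2 (comp u 0)) y + pd 1 (pd 2 (comp u 1)) y = 0 := e11
  -- c₃ : the vertical derivative of u₃ is constant
  have hc3 : ∀ y : E3, pd 2 (comp u 2) y = pd 2 (comp u 2) 0 := by
    intro y
    refine const_of_gpd_zero (contDiff_pd hf2 2) ?_ y 0
    intro j x
    fin_cases j
    · exact e1 x
    · exact e2 x
    · exact e3 x
  -- the function ∂₂∂₃u₁ - ∂₁∂₃u₂ is constant on ℝ³
  have hq3 : ∀ y : E3, pd 1 (pd 2 (comp u 0)) y - pd 0 (pd 2 (comp u 1)) y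
      = pd 1 (pd 2 (comp u 0)) 0 - pd 0 (pd 2 (comp u 1)) 0 := by
    intro y
    refine const_of_gpd_zero (n := 3)
      (f := fun y => pd 1 (pd 2 (comp u 0)) y - pd 0 (pd 2 (comp u 1)) y)
      ((contDiff_pd (contDiff_pd hf0 2) 1).sub (contDiff_pd (contDiff_pd hf1 2) 0))
      ?_ y 0
    intro j x
    have hd1 : Differentiable ℝ (pd 1 (pd 2 (comp u 0))) :=
      gpd_differentiable (contDiff_pd (contDiff_pd hf0 2) 1)
    have hd2 : Differentiable ℝ (pd 0 (pd 2 (comp u 1))) :=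
      gpd_differentiable (contDiff_pd (contDiff_pd hf1 2) 0)
    rw [show (gpd j (fun y => pd 1 (pd 2 (comp u 0)) y - pd 0 (pd 2 (comp u 1)) y) x)
        = gpd j (pd 1 (pd 2 (comp u 0))) x - gpd j (pd 0 (pd 2 (comp u 1))) x
        from gpd_sub hd1 hd2 j x]
    rw [← pd_eq_gpd, ← pd_eq_gpd]
    have case0 : pd 0 (pd 1 (pd 2 (comp u 0))) x - pd 0 (pd 0 (pd 2 (comp u 1))) x = 0 := by
      rw [pd_push2 hf0 0 1 x, pd_push2 hf1 0 0 x, pd_congr E10 2 x]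
      ring
    have case1 : pd 1 (pd 1 (pd 2 (comp u 0))) x - pd 1 (pd 0 (pd 2 (comp u 1))) x = 0 := by
      rw [pd_push2 hf0 1 1 x, pd_push2 hf1 1 0 x,
        pd_congr (fun y => pd_comm hf1 1 0 y) 2 x,
        pd_congr (fun y => (E9 y).symm) 2 x]
      ring
    have case2 : pd 2 (pd 1 (pd 2 (comp u 0))) x - pd 2 (pd 0 (pd 2 (comp u 1))) x = 0 := by
      rw [pd_comm (contDiff_pd hf0 2) 2 1 x, pd_comm (contDiff_pd hf1 2) 2 0 x,
        pd_congr E5 1 x, pd_congr E6 0 x, pd_const, pd_const]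
      ring
    fin_cases j
    · exact case0
    · exact case1
    · exact case2
  -- the function ∂₂u₁ - ∂₁u₂ restricted to the plane is constant
  have hQ2 : ∀ p : E2, pd 1 (comp u 0) (Io p) - pd 0 (comp u 1) (Io p)
      = pd 1 (comp u 0) (Io 0) - pd 0 (comp u 1) (Io 0) := by
    intro p
    have hd1 : Differentiable ℝ (fun q : E2 => pd 1 (comp u 0) (Io q)) :=
      (gpd_differentiable (contDiff_pd hf0 1)).comp Io.differentiable
    have hd2 : Differentiable ℝ (fun q : E2 => pd 0 (comp u 1) (Io q)) :=
      (gpd_differentiable (contDiff_pd hf1 0)).comp Io.differentiable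
    refine const_of_gpd_zero (n := 2)
      (f := fun q => pd 1 (comp u 0) (Io q) - pd 0 (comp u 1) (Io q))
      (((contDiff_pd hf0 1).comp Io.contDiff).sub
        ((contDiff_pd hf1 0).comp Io.contDiff)) ?_ p 0
    intro j q
    rw [show (gpd j (fun q => pd 1 (comp u 0) (Io q) - pd 0 (comp u 1) (Io q)) q)
        = gpd j (fun q => pd 1 (comp u 0) (Io q)) q
          - gpd j (fun q => pd 0 (comp u 1) (Io q)) q from gpd_sub hd1 hd2 j q]
    rw [← pd2_eq_gpd, ← pd2_eq_gpd]
    have case0 : pd2 0 (fun q : E2 => pd 1 (comp u 0) (Io q)) q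
        - pd2 0 (fun q : E2 => pd 0 (comp u 1) (Io q)) q = 0 := by
      rw [pd20_compIo _ (gpd_differentiable (contDiff_pd hf0 1)) q,
        pd20_compIo _ (gpd_differentiable (contDiff_pd hf1 0)) q]
      linarith [E10 (Io q)]
    have case1 : pd2 1 (fun q : E2 => pd 1 (comp u 0) (Io q)) q
        - pd2 1 (fun q : E2 => pd 0 (comp u 1) (Io q)) q = 0 := by
      rw [pd21_compIo _ (gpd_differentiable (contDiff_pd hf0 1)) q,
        pd21_compIo _ (gpd_differentiable (contDiff_pd hf1 0)) q,
        pd_comm hf1 1 0 (Io q)]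
      linarith [E9 (Io q)]
    fin_cases j
    · exact case0
    · exact case1
  -- the function ∂₁u₁ + ∂₂u₂ restricted to the plane is constant
  have hP2 : ∀ p : E2, pd 0 (comp u 0) (Io p) + pd 1 (comp u 1) (Io p)
      = pd 0 (comp u 0) (Io 0) + pd 1 (comp u 1) (Io 0) := by
    intro p
    have hd1 : Differentiable ℝ (fun q : E2 => pd 0 (comp u 0) (Io q)) :=
      (gpd_differentiable (contDiff_pd hf0 0)).comp Io.differentiable
    have hd2 : Differentiable ℝ (fun q : E2 => pd 1 (comp u 1) (Io q)) :=
      (gpd_differentiable (contDiff_pd hf1 1)).comp Io.differentiable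
    refine const_of_gpd_zero (n := 2)
      (f := fun q => pd 0 (comp u 0) (Io q) + pd 1 (comp u 1) (Io q))
      (((contDiff_pd hf0 0).comp Io.contDiff).add
        ((contDiff_pd hf1 1).comp Io.contDiff)) ?_ p 0
    intro j q
    rw [show (gpd j (fun q => pd 0 (comp u 0) (Io q) + pd 1 (comp u 1) (Io q)) q)
        = gpd j (fun q => pd 0 (comp u 0) (Io q)) q
          + gpd j (fun q => pd 1 (comp u 1) (Io q)) q from gpd_add hd1 hd2 j q]
    rw [← pd2_eq_gpd, ← pd2_eq_gpd]
    have case0 : pd2 0 (fun q : E2 => pd 0 (comp u 0) (Io q)) q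
        + pd2 0 (fun q : E2 => pd 1 (comp u 1) (Io q)) q = 0 := by
      rw [pd20_compIo _ (gpd_differentiable (contDiff_pd hf0 0)) q,
        pd20_compIo _ (gpd_differentiable (contDiff_pd hf1 1)) q]
      linarith [E9 (Io q), E7 (Io q)]
    have case1 : pd2 1 (fun q : E2 => pd 0 (comp u 0) (Io q)) q
        + pd2 1 (fun q : E2 => pd 1 (comp u 1) (Io q)) q = 0 := by
      rw [pd21_compIo _ (gpd_differentiable (contDiff_pd hf0 0)) q,
        pd21_compIo _ (gpd_differentiable (contDiff_pd hf1 1)) q,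
        pd_comm hf0 1 0 (Io q)]
      linarith [E10 (Io q), E8 (Io q)]
    fin_cases j
    · exact case0
    · exact case1
  have E4 : ∀ y, pd 0 (pd 0 (comp u 2)) y + pd 1 (pd 1 (comp u 2)) y = 0 := e4
  set c : ℝ := (pd 1 (pd 2 (comp u 0)) 0 - pd 0 (pd 2 (comp u 1)) 0) / 2 with hc
  set c₁ : ℝ := (pd 0 (comp u 0) (Io 0) + pd 1 (comp u 1) (Io 0)) / 2 with hc1
  set c₂ : ℝ := (pd 1 (comp u 0) (Io 0) - pd 0 (comp u 1) (Io 0)) / 2 with hc2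
  set c₃ : ℝ := pd 2 (comp u 2) 0 with hc3'
  have hq3' : ∀ y, pd 1 (pd 2 (comp u 0)) y - pd 0 (pd 2 (comp u 1)) y = 2 * c := by
    intro y; rw [hq3 y, hc]; ring
  have hQ2' : ∀ p : E2, pd 1 (comp u 0) (Io p) - pd 0 (comp u 1) (Io p) = 2 * c₂ := by
    intro p; rw [hQ2 p, hc2]; ring
  have hP2' : ∀ p : E2, pd 0 (comp u 0) (Io p) + pd 1 (comp u 1) (Io p) = 2 * c₁ := by
    intro p; rw [hP2 p, hc1]; ring
  have hA : Differentiable ℝ (fun p : E2 => pd 2 (comp u 0) (Io p)) :=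
    (gpd_differentiable (contDiff_pd hf0 2)).comp Io.differentiable
  have hC : Differentiable ℝ (fun p : E2 => pd 2 (comp u 1) (Io p)) :=
    (gpd_differentiable (contDiff_pd hf1 2)).comp Io.differentiable
  have hB : Differentiable ℝ (fun p : E2 => comp u 0 (Io p)) :=
    hfd0.comp Io.differentiable
  have hD : Differentiable ℝ (fun p : E2 => comp u 1 (Io p)) :=
    hfd1.comp Io.differentiable
  have hm0 : ∀ (a : ℝ), Differentiable ℝ (fun p : E2 => a * p 0) := fun a =>
    (differentiable_const a).mul (ContinuousLinearMap.proj 0 : E2 →L[ℝ] ℝ).differentiable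
  have hm1 : ∀ (a : ℝ), Differentiable ℝ (fun p : E2 => a * p 1) := fun a =>
    (differentiable_const a).mul (ContinuousLinearMap.proj 1 : E2 →L[ℝ] ℝ).differentiable
  have s00 : (Pi.single 0 1 : E2) 0 = 1 := rfl
  have s01 : (Pi.single 0 1 : E2) 1 = 0 := rfl
  have s10 : (Pi.single 1 1 : E2) 0 = 0 := rfl
  have s11 : (Pi.single 1 1 : E2) 1 = 1 := rfl
  refine ⟨c, c₁, c₂, c₃, 0,
    fun p => pd 2 (comp u 0) (Io p) - c * p 1,
    fun p => pd 2 (comp u 1) (Io p) + c * p 0,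
    fun p => comp u 0 (Io p) - c₁ * p 0 - c₂ * p 1,
    fun p => comp u 1 (Io p) + c₂ * p 0 - c₁ * p 1,
    fun p => comp u 2 (Io p),
    ?_, ?_, ?_, ?_, ?_, ?_, ?_, ?_, ?_, ?_, ?_, ?_, ?_⟩
  · exact ((contDiff_pd hf0 2).comp Io.contDiff).sub
      (contDiff_const.mul (ContinuousLinearMap.proj 1 : E2 →L[ℝ] ℝ).contDiff)
  · exact ((contDiff_pd hf1 2).comp Io.contDiff).add
      (contDiff_const.mul (ContinuousLinearMap.proj 0 : E2 →L[ℝ] ℝ).contDiff)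
  · exact ((hf0.comp Io.contDiff).sub
      (contDiff_const.mul (ContinuousLinearMap.proj 0 : E2 →L[ℝ] ℝ).contDiff)).sub
      (contDiff_const.mul (ContinuousLinearMap.proj 1 : E2 →L[ℝ] ℝ).contDiff)
  · exact ((hf1.comp Io.contDiff).add
      (contDiff_const.mul (ContinuousLinearMap.proj 0 : E2 →L[ℝ] ℝ).contDiff)).sub
      (contDiff_const.mul (ContinuousLinearMap.proj 1 : E2 →L[ℝ] ℝ).contDiff)
  · exact hf2.comp Io.contDiff
  · -- CR1 for h
    intro p
    rw [pd2_sub hA (hm1 c) 1 p, pd2_add hC (hm0 c) 0 p,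
      pd21_compIo _ (gpd_differentiable (contDiff_pd hf0 2)) p,
      pd20_compIo _ (gpd_differentiable (contDiff_pd hf1 2)) p,
      pd2_mul_coord c 1 1 p, pd2_mul_coord c 0 0 p, s11, s00]
    linarith [hq3' (Io p)]
  · -- CR2 for h
    intro p
    rw [pd2_sub hA (hm1 c) 0 p, pd2_add hC (hm0 c) 1 p,
      pd20_compIo _ (gpd_differentiable (contDiff_pd hf0 2)) p,
      pd21_compIo _ (gpd_differentiable (contDiff_pd hf1 2)) p,
      pd2_mul_coord c 1 0 p, pd2_mul_coord c 0 1 p, s01, s10]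
    linarith [E11 (Io p)]
  · -- CR1 for k
    intro p
    rw [pd2_sub (f := fun q => comp u 0 (Io q) - c₁ * q 0) (hB.sub (hm0 c₁)) (hm1 c₂) 1 p, pd2_sub hB (hm0 c₁) 1 p,
      pd2_sub (f := fun q => comp u 1 (Io q) + c₂ * q 0) (hD.add (hm0 c₂)) (hm1 c₁) 0 p, pd2_add hD (hm0 c₂) 0 p,
      pd21_compIo _ hfd0 p, pd20_compIo _ hfd1 p,
      pd2_mul_coord c₁ 0 1 p, pd2_mul_coord c₂ 1 1 p,
      pd2_mul_coord c₂ 0 0 p, pd2_mul_coord c₁ 1 0 p, s00, s01, s10, s11]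
    linarith [hQ2' p]
  · -- CR2 for k
    intro p
    rw [pd2_sub (f := fun q => comp u 0 (Io q) - c₁ * q 0) (hB.sub (hm0 c₁)) (hm1 c₂) 0 p, pd2_sub hB (hm0 c₁) 0 p,
      pd2_sub (f := fun q => comp u 1 (Io q) + c₂ * q 0) (hD.add (hm0 c₂)) (hm1 c₁) 1 p, pd2_add hD (hm0 c₂) 1 p,
      pd20_compIo _ hfd0 p, pd21_compIo _ hfd1 p,
      pd2_mul_coord c₁ 0 0 p, pd2_mul_coord c₂ 1 0 p,
      pd2_mul_coord c₂ 0 1 p, pd2_mul_coord c₁ 1 1 p, s00, s01, s10, s11]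
    linarith [hP2' p]
  · -- harmonicity of w
    intro p
    have w0 : ∀ q : E2, pd2 0 (fun q : E2 => comp u 2 (Io q)) q
        = pd 0 (comp u 2) (Io q) := pd20_compIo _ hfd2
    have w1 : ∀ q : E2, pd2 1 (fun q : E2 => comp u 2 (Io q)) q
        = pd 1 (comp u 2) (Io q) := pd21_compIo _ hfd2
    rw [pd2_congr w0 0 p, pd2_congr w1 1 p,
      pd20_compIo _ (gpd_differentiable (contDiff_pd hf2 0)) p,
      pd21_compIo _ (gpd_differentiable (contDiff_pd hf2 1)) p]
    exact E4 (Io p)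
  · -- representation of u₁
    intro x
    have haff := affine_of_pdd22 hf0 e5 x
    rw [Pr_apply] at haff
    show comp u 0 x = _
    rw [haff]
    simp only [Pi.zero_apply, Matrix.cons_val_zero, Matrix.cons_val_one, Matrix.head_cons]
    ring
  · -- representation of u₂
    intro x
    have haff := affine_of_pdd22 hf1 e6 x
    rw [Pr_apply] at haff
    show comp u 1 x = _
    rw [haff]
    simp only [Pi.zero_apply, Matrix.cons_val_zero, Matrix.cons_val_one, Matrix.head_cons]
    ring
  · -- representation of u₃
    intro x
    have haff := affine_of_pdd22 hf2 e3 x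
    rw [Pr_apply] at haff
    show comp u 2 x = _
    rw [haff, hc3 (Io ![x 0, x 1])]
    simp only [Pi.zero_apply]
    ring

/-- A smooth displacement field `u : ℝ³ → ℝ³` satisfies the transverse-isotropy
universality constraints if and only if it has the representation
`u₁ = c₁x₁ + c₂x₂ + cx₂x₃ + x₃h₁(x₁,x₂) + k₁(x₁,x₂) + b₁`,
`u₂ = −c₂x₁ + c₁x₂ − cx₁x₃ + x₃h₂(x₁,x₂) + k₂(x₁,x₂) + b₂`,
`u₃ = c₃x₃ + w(x₁,x₂) + b₃`, where `(h₁,h₂)` and `(k₁,k₂)` satisfy the Cauchy–Riemann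
relations (i.e. `h₁ + ih₂` and `k₁ + ik₂` are holomorphic in `x₂ + ix₁`) and `w` is a
smooth harmonic function. -/
theorem transversely_isotropic_universal_displacements
    (u : (Fin 3 → ℝ) → Fin 3 → ℝ) (hu : ContDiff ℝ (⊤ : ℕ∞) u) :
    ((∀ x, pdd 0 2 u 2 x = 0) ∧ (∀ x, pdd 1 2 u 2 x = 0) ∧ (∀ x, pdd 2 2 u 2 x = 0) ∧
     (∀ x, pdd 0 0 u 2 x + pdd 1 1 u 2 x = 0) ∧
     (∀ x, pdd 2 2 u 0 x = 0) ∧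
     (∀ x, pdd 2 2 u 1 x = 0) ∧
     (∀ x, pdd 0 0 u 0 x + pdd 1 1 u 0 x = 0) ∧
     (∀ x, pdd 0 0 u 1 x + pdd 1 1 u 1 x = 0) ∧
     (∀ x, pdd 1 1 u 0 x = pdd 0 1 u 1 x) ∧
     (∀ x, pdd 0 0 u 1 x = pdd 0 1 u 0 x) ∧
     (∀ x, pdd 0 2 u 0 x + pdd 1 2 u 1 x = 0)) ↔
    ∃ (c c₁ c₂ c₃ : ℝ) (b : Fin 3 → ℝ) (h₁ h₂ k₁ k₂ w : (Fin 2 → ℝ) → ℝ),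
      ContDiff ℝ (⊤ : ℕ∞) h₁ ∧ ContDiff ℝ (⊤ : ℕ∞) h₂ ∧
      ContDiff ℝ (⊤ : ℕ∞) k₁ ∧ ContDiff ℝ (⊤ : ℕ∞) k₂ ∧
      ContDiff ℝ (⊤ : ℕ∞) w ∧
      (∀ p, pd2 1 h₁ p = pd2 0 h₂ p) ∧ (∀ p, pd2 0 h₁ p = -pd2 1 h₂ p) ∧
      (∀ p, pd2 1 k₁ p = pd2 0 k₂ p) ∧ (∀ p, pd2 0 k₁ p = -pd2 1 k₂ p) ∧
      (∀ p, pd2 0 (pd2 0 w) p + pd2 1 (pd2 1 w) p = 0) ∧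
      (∀ x, u x 0 = c₁ * x 0 + c₂ * x 1 + c * (x 1 * x 2)
          + x 2 * h₁ ![x 0, x 1] + k₁ ![x 0, x 1] + b 0) ∧
      (∀ x, u x 1 = -(c₂ * x 0) + c₁ * x 1 - c * (x 0 * x 2)
          + x 2 * h₂ ![x 0, x 1] + k₂ ![x 0, x 1] + b 1) ∧
      (∀ x, u x 2 = c₃ * x 2 + w ![x 0, x 1] + b 2) := by
  constructor
  · rintro ⟨e1, e2, e3, e4, e5, e6, e7, e8, e9, e10, e11⟩
    exact forward_direction u hu e1 e2 e3 e4 e5 e6 e7 e8 e9 e10 e11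
  · rintro ⟨c, c₁, c₂, c₃, b, h₁, h₂, k₁, k₂, w, hh₁, hh₂, hk₁, hk₂, hw,
      hcrh1, hcrh2, hcrk1, hcrk2, hharm, hu0, hu1, hu2⟩
    exact reverse_direction u c c₁ c₂ c₃ b h₁ h₂ k₁ k₂ w hh₁ hh₂ hk₁ hk₂ hw
      hcrh1 hcrh2 hcrk1 hcrk2 hharm hu0 hu1 hu2
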